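/- Define the trilinear form φ : Im 𝕆 × Im 𝕆 × Im 𝕆 → ℝ by φ(x,y,z) := ⟨x·y, z⟩. Then for every automorphism g of 𝕆 and all x, y, z ∈ Im 𝕆, one has φ(g(x), g(y), g(z)) = φ(x, y, z) (where g(x), g(y), g(z) ∈ Im 𝕆); that is, φ is invariant under the automorphism group G₂ of 𝕆. -/

import Mathlib

noncomputable section

/-- The octonions, as pairs of quaternions. -/
abbrev Octo : Type := Quaternion ℝ × Quaternion ℝ

/-- Octonion multiplication. -/
def omul (x y : Octo) : Octo :=
  (x.1 * y.1 - star y.2 * x.2, y.2 * x.1 + x.2 * star y.1)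

/-- The unit octonion. -/
def oone : Octo := (1, 0)

/-- The inner product on the octonions. -/
def oinner (x y : Octo) : ℝ :=
  (x.1 * star y.1).re + (x.2 * star y.2).re

/-- The real part of an octonion. -/
def oRe (x : Octo) : ℝ := x.1.re

/-- An octonion is imaginary if its real part vanishes. -/
def isIm (x : Octo) : Prop := oRe x = 0

/-- The standard orthonormal basis e₁,…,e₇ of Im 𝕆. -/
def oe : Fin 7 → Octo :=
  ![((⟨0,1,0,0⟩ : Quaternion ℝ), 0),
    ((⟨0,0,1,0⟩ : Quaternion ℝ), 0),
    ((⟨0,0,0,1⟩ : Quaternion ℝ), 0),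
    (0, 1),
    (0, (⟨0,1,0,0⟩ : Quaternion ℝ)),
    (0, (⟨0,0,1,0⟩ : Quaternion ℝ)),
    (0, (⟨0,0,0,1⟩ : Quaternion ℝ))]

/-- The invariant 3-form phi(x,y,z) = <x*y, z> on Im O. -/
def ophi (x y z : Octo) : ℝ := oinner (omul x y) z

lemma key (x : Octo) : omul x x = (2 * oRe x) • x - (oinner x x) • oone := by
  obtain ⟨a, b⟩ := x
  simp only [omul, oone, oRe, oinner, Prod.ext_iff, Prod.smul_mk, Prod.mk_sub_mk]
  constructor <;>
  · ext <;> simp [Quaternion.re_mul, Quaternion.imI_mul, Quaternion.imJ_mul,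
      Quaternion.imK_mul, Quaternion.re_one, Quaternion.imI_one, Quaternion.imJ_one,
      Quaternion.imK_one] <;> ring

lemma omul_oone_left (y : Octo) : omul oone y = y := by
  simp [omul, oone]

lemma oinner_symm (x y : Octo) : oinner x y = oinner y x := by
  simp [oinner, Quaternion.re_mul]; ring

lemma oinner_add_left (x y z : Octo) : oinner (x + y) z = oinner x z + oinner y z := by
  simp [oinner, add_mul]; ring

lemma oinner_add_right (x y z : Octo) : oinner x (y + z) = oinner x y + oinner x z := by
  rw [oinner_symm, oinner_add_left, oinner_symm y x, oinner_symm z x]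

lemma oinner_smul_left (r : ℝ) (x z : Octo) : oinner (r • x) z = r * oinner x z := by
  simp [oinner, Quaternion.re_mul]; ring

lemma oinner_oone_left (z : Octo) : oinner oone z = oRe z := by
  simp [oinner, oone, oRe, Quaternion.re_zero]

lemma oone_ne_zero : oone ≠ 0 := by
  simp [oone, Prod.ext_iff]

lemma oRe_smul_oone (s : ℝ) : oRe (s • oone) = s := by
  simp [oRe, oone, Quaternion.re_one]

theorem statement18 (g : Octo →ₗ[ℝ] Octo)
    (hbij : Function.Bijective g)
    (hmul : ∀ x y : Octo, g (omul x y) = omul (g x) (g y)) :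
    ∀ x y z : Octo, isIm x → isIm y → isIm z →
      ophi (g x) (g y) (g z) = ophi x y z := by
  have hone : g oone = oone := by
    obtain ⟨y, hy⟩ := hbij.2 ((0, 1) : Octo)
    have h := hmul oone y
    rw [omul_oone_left, hy] at h
    simp only [omul, Prod.ext_iff] at h
    simp at h
    obtain ⟨h1, h2⟩ := h
    have heq : g oone = ((g oone).1, (g oone).2) := rfl
    rw [heq, h1, ← h2]
    rfl
  have him : ∀ x : Octo, isIm x → isIm (g x) ∧ oinner (g x) (g x) = oinner x x := by
    intro x hx
    have hL : g (omul x x) = -(oinner x x) • oone := by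
      rw [key x, map_sub, map_smul, map_smul, hone]
      rw [show oRe x = 0 from hx]
      simp
    have hE : (2 * oRe (g x)) • (g x) - oinner (g x) (g x) • oone = -(oinner x x) • oone := by
      rw [← key (g x), ← hmul, hL]
    have hstep : (2 * oRe (g x)) • (g x) = (oinner (g x) (g x) - oinner x x) • oone := by
      have h := hE
      rw [sub_eq_iff_eq_add] at h
      rw [h, sub_smul]
      module
    by_cases hre : oRe (g x) = 0
    · refine ⟨hre, ?_⟩
      rw [hre] at hstep
      simp only [mul_zero, zero_smul] at hstep
      rcases smul_eq_zero.mp hstep.symm with h | h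
      · linarith [sub_eq_zero.mp (by linarith [h] : oinner (g x) (g x) - oinner x x = 0)]
      · exact absurd h oone_ne_zero
    · exfalso
      have h2 : (2 * oRe (g x)) ≠ 0 := mul_ne_zero two_ne_zero hre
      set s := (2 * oRe (g x))⁻¹ * (oinner (g x) (g x) - oinner x x) with hs
      have hu2 : g x = s • oone := by
        rw [hs, mul_smul, ← hstep, inv_smul_smul₀ h2]
      have hx2 : x = s • oone := by
        apply hbij.1
        rw [map_smul, hone, hu2]
      have hsx : oRe x = s := by rw [hx2, oRe_smul_oone]
      have hs0 : s = 0 := by rw [← hsx]; exact hx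
      have : g x = 0 := by rw [hu2, hs0, zero_smul]
      rw [this] at hre
      exact hre (by simp [oRe, Quaternion.re_zero])
  have hinner : ∀ x y : Octo, isIm x → isIm y → oinner (g x) (g y) = oinner x y := by
    intro x y hx hy
    have hxy : isIm (x + y) := by
      simp only [isIm, oRe, Prod.fst_add, Quaternion.re_add] at *
      rw [hx, hy, add_zero]
    have h1 := (him x hx).2
    have h2 := (him y hy).2
    have h3 := (him _ hxy).2
    rw [map_add] at h3
    have e1 : ∀ a b : Octo, oinner (a+b) (a+b)
        = oinner a a + 2 * oinner a b + oinner b b := by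
      intro a b
      rw [oinner_add_left, oinner_add_right, oinner_add_right, oinner_symm b a]
      ring
    rw [e1, e1] at h3
    linarith
  intro x y z hx hy hz
  have hz' := (him z hz).1
  set r := oRe (omul x y) with hr
  set w := omul x y - r • oone with hw
  have hwim : isIm w := by
    simp only [isIm, hw, oRe, Prod.fst_sub, Quaternion.re_sub]
    rw [show ((r • oone : Octo).1).re = r from oRe_smul_oone r]
    exact sub_self _
  have hdecomp : omul x y = r • oone + w := by rw [hw]; module
  unfold ophi
  rw [← hmul, hdecomp, map_add, map_smul, hone]
  rw [oinner_add_left, oinner_add_left, oinner_smul_left, oinner_smul_left,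
    oinner_oone_left, oinner_oone_left, hinner w z hwim hz,
    show oRe (g z) = 0 from hz', show oRe z = 0 from hz]
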